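/- arXiv:1512.02978 — 5 statements merged into one kernel-verified Lean document; each statement's English description precedes it below -/
import Mathlib

section
/- For all nonnegative integers n, m with n ≥ 2m+2, the sum ∑_{j≥0} (C(n, m−3j) − C(n, m−3j−1)) equals ∑_{j=0}^{m} C(n−2j−2, m−j), where C(n,k)=0 for k<0. -/
/-- Binomial coefficient with the convention `C n k = 0` for `k < 0`. -/
def binom (n : ℕ) (k : ℤ) : ℕ := if k < 0 then 0 else n.choose k.toNat

/-!
Both sides `S n m` satisfy `S (n + 2) (m + 1) = C(n, m + 1) + S n m` and equal `1` at `m = 0`,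
so they agree by induction on `m`. For the right-hand side this is splitting off the term
`j = 0`. For the left-hand side, double Pascal
`C(n + 2, k) = C(n, k) + 2 C(n, k - 1) + C(n, k - 2)` turns the difference of the two sums into
`∑ⱼ (C(n, m + 1 - 3j) - C(n, m - 2 - 3j))`, which telescopes to `C(n, m + 1)`.
-/

open Finset

lemma binom_of_neg (n : ℕ) {k : ℤ} (hk : k < 0) : binom n k = 0 := if_pos hk

lemma binom_natCast (n k : ℕ) : binom n k = n.choose k := by
  simp [binom]

lemma binom_succ (n : ℕ) (k : ℤ) : binom (n + 1) k = binom n k + binom n (k - 1) := by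
  rcases lt_or_ge k 0 with hk | hk
  · rw [binom_of_neg _ hk, binom_of_neg _ hk, binom_of_neg _ (by omega)]
  lift k to ℕ using hk
  cases k with
  | zero => simp [binom]
  | succ k =>
    rw [show ((k + 1 : ℕ) : ℤ) - 1 = k by push_cast; ring, binom_natCast, binom_natCast,
      binom_natCast, Nat.choose_succ_succ', add_comm]

lemma binom_add_two (n : ℕ) (k : ℤ) :
    binom (n + 2) k = binom n k + 2 * binom n (k - 1) + binom n (k - 2) := by
  rw [binom_succ, binom_succ, binom_succ n (k - 1), sub_sub, one_add_one_eq_two]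
  ring

def binomDiffSum (n m : ℕ) : ℤ :=
  ∑ j ∈ range (m + 1),
    ((binom n ((m : ℤ) - 3 * j) : ℤ) - (binom n ((m : ℤ) - 3 * j - 1) : ℤ))

def shiftedChooseSum (n m : ℕ) : ℤ :=
  ∑ j ∈ range (m + 1), ((n - 2 * j - 2).choose (m - j) : ℤ)

lemma shiftedChooseSum_add_two_succ (n m : ℕ) :
    shiftedChooseSum (n + 2) (m + 1) = n.choose (m + 1) + shiftedChooseSum n m := by
  rw [shiftedChooseSum, sum_range_succ', add_comm, shiftedChooseSum]
  congr 1
  refine sum_congr rfl fun j _ => ?_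
  rw [show n + 2 - 2 * (j + 1) - 2 = n - 2 * j - 2 by omega, Nat.add_sub_add_right]

lemma binom_add_two_diff_sub (n : ℕ) (k : ℤ) :
    ((binom (n + 2) (k + 1) : ℤ) - binom (n + 2) k) - (binom n k - binom n (k - 1)) =
      binom n (k + 1) - binom n (k - 2) := by
  rw [binom_add_two, binom_add_two, add_sub_cancel_right, show k + 1 - 2 = k - 1 by ring]
  push_cast
  ring

lemma binomDiffSum_add_two_succ (n m : ℕ) :
    binomDiffSum (n + 2) (m + 1) = n.choose (m + 1) + binomDiffSum n m := by
  set f : ℕ → ℤ := fun j => binom n ((m + 1 : ℕ) - 3 * j : ℤ)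
  have hlast : (binom n ((m : ℤ) - 3 * (m + 1 : ℕ)) : ℤ) -
      binom n ((m : ℤ) - 3 * (m + 1 : ℕ) - 1) = 0 := by
    rw [binom_of_neg _ (by omega), binom_of_neg _ (by omega), sub_self]
  have hext : binomDiffSum n m = ∑ j ∈ range (m + 2),
      ((binom n ((m : ℤ) - 3 * j) : ℤ) - (binom n ((m : ℤ) - 3 * j - 1) : ℤ)) := by
    rw [sum_range_succ, hlast, add_zero, binomDiffSum]
  have hdiff : binomDiffSum (n + 2) (m + 1) - binomDiffSum n m =
      ∑ j ∈ range (m + 2), (f j - f (j + 1)) := by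
    rw [hext, binomDiffSum, ← sum_sub_distrib]
    refine sum_congr rfl fun j _ => ?_
    have := binom_add_two_diff_sub n ((m : ℤ) - 3 * j)
    simp only [f]
    push_cast at this ⊢
    rw [show (m : ℤ) + 1 - 3 * (j + 1) = m - 3 * j - 2 by ring,
      show (m : ℤ) + 1 - 3 * j - 1 = m - 3 * j by ring,
      show (m : ℤ) + 1 - 3 * j = m - 3 * j + 1 by ring]
    exact this
  have hf0 : f 0 = n.choose (m + 1) := by
    simp only [f, Nat.cast_zero, mul_zero, sub_zero, binom_natCast]
  have hfend : f (m + 2) = 0 := by simp only [f]; rw [binom_of_neg _ (by omega), Nat.cast_zero]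
  rw [sum_range_sub', hf0, hfend, sub_zero] at hdiff
  linarith

theorem stmt_2 (n m : ℕ) (h : 2 * m + 2 ≤ n) :
    ∑ j ∈ Finset.range (m + 1),
      ((binom n ((m : ℤ) - 3 * j) : ℤ) - (binom n ((m : ℤ) - 3 * j - 1) : ℤ)) =
    ∑ j ∈ Finset.range (m + 1), ((n - 2 * j - 2).choose (m - j) : ℤ) := by
  change binomDiffSum n m = shiftedChooseSum n m
  induction m generalizing n with
  | zero => simp [binomDiffSum, shiftedChooseSum, binom]
  | succ m ih =>
    obtain ⟨n, rfl⟩ : ∃ n', n = n' + 2 := ⟨n - 2, by omega⟩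
    rw [binomDiffSum_add_two_succ, shiftedChooseSum_add_two_succ, ih n (by omega)]
end

section
/- For all nonnegative integers n, m with n ≥ 2m, ∑_{j=0}^{m} (C(2m, j) − C(2m, j−1)) · C(n−2m, m−j) = C(n, m) − C(n, m−1), where C(a,b)=0 for b<0. -/
/-!
Writing `n = 2m + N`, the sum splits into `∑ C(2m, j) C(N, m - j)` and `∑ C(2m, j - 1) C(N, m - j)`,
which are `C(n, m)` and `C(n, m - 1)` by Vandermonde's identity (the second after shifting `j`).
-/

open Finset

@[simp]
theorem binom_natCast_s3 (a k : ℕ) : binom a k = a.choose k := by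
  simp [binom]

@[simp]
theorem binom_neg_one (a : ℕ) : binom a (-1) = 0 := by
  simp [binom]

theorem sum_range_choose_mul_choose (a b k : ℕ) :
    ∑ j ∈ range (k + 1), a.choose j * b.choose (k - j) = (a + b).choose k := by
  rw [Nat.add_choose_eq, Nat.sum_antidiagonal_eq_sum_range_succ_mk]

theorem sum_range_binom_sub_one_mul_choose (a b m : ℕ) :
    ∑ j ∈ range (m + 1), binom a ((j : ℤ) - 1) * b.choose (m - j) = binom (a + b) ((m : ℤ) - 1) := by
  cases m with
  | zero => simp
  | succ k =>
    rw [sum_range_succ']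
    simpa using sum_range_choose_mul_choose a b k

theorem stmt_3 (n m : ℕ) (h : 2 * m ≤ n) :
    ∑ j ∈ Finset.range (m + 1),
      (((2 * m).choose j : ℤ) - (binom (2 * m) ((j : ℤ) - 1) : ℤ)) *
        ((n - 2 * m).choose (m - j) : ℤ) =
    (n.choose m : ℤ) - (binom n ((m : ℤ) - 1) : ℤ) := by
  obtain ⟨N, rfl⟩ := Nat.exists_eq_add_of_le h
  rw [Nat.add_sub_cancel_left, ← sum_range_choose_mul_choose,
    ← sum_range_binom_sub_one_mul_choose]
  push_cast
  simp only [sub_mul, sum_sub_distrib]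
end

section
/- For m+1 ≤ n−m, the minimum width of a cutset in B_n(m, m+1) is at most C(n−1, m): there exists a cutset C ⊆ B_n(m, m+1) such that every antichain contained in C has size at most C(n−1, m). -/
/-!
Fix a pivot element `a`. Take all `m`-sets avoiding `a` and all `(m+1)`-sets containing `a`:
an edge `A ⊂ B` either has `a ∉ A`, or else `a ∈ A ⊆ B`, so this family is a cutset. Deleting `a`
maps it onto the `m`-subsets of the other `n - 1` points, and this map is injective on antichains,
since two sets with the same image under deletion of `a` are comparable.
-/

open Finset

section PivotCutset

variable {α : Type*} [DecidableEq α]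

theorem IsAntichain.injOn_erase {S : Set (Finset α)} (hS : IsAntichain (· ⊆ ·) S) (a : α) :
    S.InjOn (·.erase a) := by
  intro B₁ h₁ B₂ h₂ heq
  simp only at heq
  by_contra hne
  by_cases c₁ : a ∈ B₁ <;> by_cases c₂ : a ∈ B₂
  · exact hne (by rw [← insert_erase c₁, ← insert_erase c₂, heq])
  · exact hS h₂ h₁ (Ne.symm hne) (by rw [← erase_eq_of_notMem c₂, ← heq]; exact erase_subset _ _)
  · exact hS h₁ h₂ hne (by rw [← erase_eq_of_notMem c₁, heq]; exact erase_subset _ _)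
  · exact hne (by rw [← erase_eq_of_notMem c₁, ← erase_eq_of_notMem c₂, heq])

def pivotCutset (U : Finset α) (a : α) (m : ℕ) : Finset (Finset α) :=
  (U.erase a).powersetCard m ∪ {B ∈ U.powersetCard (m + 1) | a ∈ B}

variable {U : Finset α} {a : α} {m : ℕ}

theorem pivotCutset_subset :
    pivotCutset U a m ⊆ U.powersetCard m ∪ U.powersetCard (m + 1) :=
  union_subset_union (powersetCard_mono (erase_subset a U)) (filter_subset _ _)

theorem pivotCutset_meets_chain {A B : Finset α} (hB : B ⊆ U) (hA : #A = m) (hB' : #B = m + 1)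
    (hAB : A ⊆ B) : A ∈ pivotCutset U a m ∨ B ∈ pivotCutset U a m := by
  unfold pivotCutset
  by_cases ha : a ∈ A
  · exact .inr (mem_union_right _ (mem_filter.mpr ⟨mem_powersetCard.mpr ⟨hB, hB'⟩, hAB ha⟩))
  · refine .inl (mem_union_left _ (mem_powersetCard.mpr ⟨?_, hA⟩))
    rw [← erase_eq_of_notMem ha]
    exact erase_subset_erase a (hAB.trans hB)

theorem erase_mem_powersetCard_of_mem_pivotCutset {B : Finset α} (hB : B ∈ pivotCutset U a m) :
    B.erase a ∈ (U.erase a).powersetCard m := by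
  rcases mem_union.mp hB with hB | hB
  · have ha : a ∉ B := fun ha => by simpa using (mem_powersetCard.mp hB).1 ha
    rwa [erase_eq_of_notMem ha]
  · obtain ⟨hB, ha⟩ := mem_filter.mp hB
    obtain ⟨hBU, hcard⟩ := mem_powersetCard.mp hB
    exact mem_powersetCard.mpr
      ⟨erase_subset_erase a hBU, by rw [card_erase_of_mem ha, hcard, Nat.add_sub_cancel]⟩

theorem card_le_of_isAntichain_of_subset_pivotCutset {S : Finset (Finset α)}
    (hS : S ⊆ pivotCutset U a m) (hanti : IsAntichain (· ⊆ ·) (S : Set (Finset α))) :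
    #S ≤ (#(U.erase a)).choose m := by
  rw [← card_powersetCard]
  exact card_le_card_of_injOn _ (fun B hB => erase_mem_powersetCard_of_mem_pivotCutset (hS hB))
    (hanti.injOn_erase a)

end PivotCutset

theorem stmt_7_general (n m : ℕ) :
    ∃ C : Finset (Finset ℕ),
      (∀ A ∈ C, A ⊆ Finset.Icc 1 n ∧ m ≤ A.card ∧ A.card ≤ m + 1) ∧
      -- C is a cutset: it meets every maximal chain A ⊂ B
      (∀ A B : Finset ℕ, A ⊆ Finset.Icc 1 n → B ⊆ Finset.Icc 1 n →
        A.card = m → B.card = m + 1 → A ⊆ B → A ∈ C ∨ B ∈ C) ∧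
      -- every antichain contained in C has size at most C(n-1, m)
      (∀ S : Finset (Finset ℕ), S ⊆ C →
        IsAntichain (· ⊆ ·) (S : Set (Finset ℕ)) → S.card ≤ (n - 1).choose m) := by
  refine ⟨pivotCutset (Icc 1 n) 1 m, fun A hA => ?_,
    fun A B _ hB hA hB' hAB => pivotCutset_meets_chain hB hA hB' hAB, fun S hS hanti => ?_⟩
  · rcases mem_union.mp (pivotCutset_subset hA) with hA | hA <;>
      obtain ⟨hAU, hcard⟩ := mem_powersetCard.mp hA <;> exact ⟨hAU, by omega, by omega⟩
  · simpa [Icc_erase_left, Nat.card_Ioc] using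
      card_le_of_isAntichain_of_subset_pivotCutset hS hanti

theorem stmt_7 (n m : ℕ) (h : m + 1 ≤ n - m) :
    ∃ C : Finset (Finset ℕ),
      (∀ A ∈ C, A ⊆ Finset.Icc 1 n ∧ m ≤ A.card ∧ A.card ≤ m + 1) ∧
      -- C is a cutset: it meets every maximal chain A ⊂ B
      (∀ A B : Finset ℕ, A ⊆ Finset.Icc 1 n → B ⊆ Finset.Icc 1 n →
        A.card = m → B.card = m + 1 → A ⊆ B → A ∈ C ∨ B ∈ C) ∧
      -- every antichain contained in C has size at most C(n-1, m)
      (∀ S : Finset (Finset ℕ), S ⊆ C →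
        IsAntichain (· ⊆ ·) (S : Set (Finset ℕ)) → S.card ≤ (n - 1).choose m) :=
  stmt_7_general n m
end

section
/- For n ≥ 2m+2, the minimum width of a cutset in B_n(m, m+2) is at most C(n−2, m) plus the minimum width of a cutset in B_{n−2}(m−1, m+1). -/
open Finset
open scoped Classical

/-- The truncated Boolean lattice `B_n(m,l)`: subsets of `[n] = {1,...,n}`
of size at least `m` and at most `l`. -/
def truncBool (n m l : ℕ) : Finset (Finset ℕ) :=
  (Finset.Icc 1 n).powerset.filter (fun A => m ≤ A.card ∧ A.card ≤ l)

/-- `C` is a cutset of `B_n(m,l)`: it is contained in `B_n(m,l)` and meets every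
saturated (maximal) chain `A_m ⊂ A_{m+1} ⊂ ⋯ ⊂ A_l` with `|A_i| = i`. -/
def IsCutset (n m l : ℕ) (C : Finset (Finset ℕ)) : Prop :=
  C ⊆ truncBool n m l ∧
  ∀ f : ℕ → Finset ℕ,
    (∀ i, m ≤ i → i ≤ l → f i ⊆ Finset.Icc 1 n ∧ (f i).card = i) →
    (∀ i, m ≤ i → i < l → f i ⊆ f (i + 1)) →
    ∃ i, m ≤ i ∧ i ≤ l ∧ f i ∈ C

/-- The width of a family of sets: the maximum size of an antichain contained in it. -/
noncomputable def widthF (C : Finset (Finset ℕ)) : ℕ :=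
  (C.powerset.filter (fun S : Finset (Finset ℕ) => IsAntichain (· ⊆ ·) (S : Set (Finset ℕ)))).sup
    Finset.card

/-- `hFun n m l` is the minimum width of a cutset in `B_n(m,l)`. -/
noncomputable def hFun (n m l : ℕ) : ℕ :=
  sInf {w | ∃ C : Finset (Finset ℕ), IsCutset n m l C ∧ widthF C = w}

/-! Take a cutset `D` of `B_{n-2}(m-1, m+1)` of minimum width. For every `m`-subset `g` of `[n-2]`
add the chain `g ⊂ g ∪ {n-1} ⊂ g ∪ {n-1, n}`, and add `A ∪ {n}` for every `A ∈ D`. A saturated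
chain of `B_n(m, m+2)` meets one of these three-element chains unless it contains `n` from its
bottom on and avoids `n - 1` up to its top; then deleting `n` turns it into a saturated chain of
`B_{n-2}(m-1, m+1)`, which `D` meets. An antichain meets each of the `C(n-2, m)` chains at most
once, and its remaining part is, after deleting `n`, an antichain in `D`. -/

lemma mem_truncBool {n m l : ℕ} {A : Finset ℕ} :
    A ∈ truncBool n m l ↔ A ⊆ Icc 1 n ∧ m ≤ A.card ∧ A.card ≤ l := by
  simp [truncBool]

lemma widthF_le {C : Finset (Finset ℕ)} {K : ℕ}
    (h : ∀ S ⊆ C, IsAntichain (· ⊆ ·) (S : Set (Finset ℕ)) → S.card ≤ K) :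
    widthF C ≤ K :=
  Finset.sup_le fun S hS => by
    rw [mem_filter, mem_powerset] at hS
    exact h S hS.1 hS.2

lemma card_le_widthF {C S : Finset (Finset ℕ)} (hSC : S ⊆ C)
    (hS : IsAntichain (· ⊆ ·) (S : Set (Finset ℕ))) : S.card ≤ widthF C :=
  Finset.le_sup (f := Finset.card) (mem_filter.mpr ⟨mem_powerset.mpr hSC, hS⟩)

lemma widthF_union_le (A B : Finset (Finset ℕ)) : widthF (A ∪ B) ≤ widthF A + widthF B := by
  refine widthF_le fun S hS hanti => ?_
  calc S.card = (S ∩ A).card + (S \ A).card := (card_inter_add_card_sdiff S A).symm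
    _ ≤ widthF A + widthF B := by
      gcongr
      · exact card_le_widthF inter_subset_right (hanti.subset (by simp))
      · refine card_le_widthF (fun X hX => ?_) (hanti.subset (by simp))
        obtain ⟨hXS, hXA⟩ := mem_sdiff.mp hX
        simpa [hXA] using hS hXS

lemma widthF_biUnion_le_card {ι : Type*} (T : Finset ι) (c : ι → Finset (Finset ℕ))
    (hc : ∀ t ∈ T, IsChain (· ⊆ ·) (c t : Set (Finset ℕ))) :
    widthF (T.biUnion c) ≤ T.card := by
  refine widthF_le fun S hS hanti => ?_
  have hS_eq : S = T.biUnion fun t => S ∩ c t := by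
    ext X
    simp only [mem_biUnion, mem_inter]
    exact ⟨fun hX => by simpa [hX] using hS hX, fun ⟨_, _, hX, _⟩ => hX⟩
  calc S.card = (T.biUnion fun t => S ∩ c t).card := congrArg card hS_eq
    _ ≤ ∑ t ∈ T, (S ∩ c t).card := card_biUnion_le
    _ ≤ ∑ _t ∈ T, 1 := sum_le_sum fun t ht => card_le_one_iff_subsingleton.mpr <| by
        simpa using inter_subsingleton_of_isAntichain_of_isChain hanti (hc t ht)
    _ = T.card := by simp

lemma widthF_image_le {D : Finset (Finset ℕ)} (g : Finset ℕ → Finset ℕ)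
    (hg : ∀ A ∈ D, ∀ B ∈ D, g A ⊆ g B ↔ A ⊆ B) : widthF (D.image g) ≤ widthF D := by
  refine widthF_le fun S hS hanti => ?_
  obtain ⟨S', hS'D, rfl⟩ := subset_image_iff.mp hS
  have hinj : Set.InjOn g S' := fun A hA B hB hAB =>
    subset_antisymm ((hg A (hS'D hA) B (hS'D hB)).mp hAB.le)
      ((hg B (hS'D hB) A (hS'D hA)).mp hAB.ge)
  rw [card_image_of_injOn hinj]
  refine card_le_widthF hS'D fun A hA B hB hAB hsub => ?_
  exact hanti (mem_image_of_mem g hA) (mem_image_of_mem g hB) (hinj.ne hA hB hAB)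
    ((hg A (hS'D hA) B (hS'D hB)).mpr hsub)

lemma subset_of_chain {α : Type*} {f : ℕ → Finset α} {m l : ℕ}
    (hf : ∀ i, m ≤ i → i < l → f i ⊆ f (i + 1))
    {i j : ℕ} (hmi : m ≤ i) (hij : i ≤ j) (hjl : j ≤ l) : f i ⊆ f j := by
  induction j, hij using Nat.le_induction with
  | base => exact Subset.rfl
  | succ j hij ih => exact (ih (by omega)).trans (hf j (by omega) (by omega))

lemma truncBool_isCutset {n m l : ℕ} (hml : m ≤ l) : IsCutset n m l (truncBool n m l) :=
  ⟨Subset.rfl, fun f hf _ => ⟨m, le_rfl, hml, mem_truncBool.mpr <| by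
    obtain ⟨hsub, hcard⟩ := hf m le_rfl hml
    exact ⟨hsub, hcard.ge, by omega⟩⟩⟩

lemma hFun_le_widthF {n m l : ℕ} {C : Finset (Finset ℕ)} (hC : IsCutset n m l C) :
    hFun n m l ≤ widthF C :=
  Nat.sInf_le ⟨C, hC, rfl⟩

lemma exists_isCutset_widthF_eq_hFun {n m l : ℕ} (hml : m ≤ l) :
    ∃ C, IsCutset n m l C ∧ widthF C = hFun n m l :=
  Nat.sInf_mem
    (⟨_, _, truncBool_isCutset hml, rfl⟩ : {w | ∃ C, IsCutset n m l C ∧ widthF C = w}.Nonempty)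

lemma erase_mem_powersetCard {α : Type*} [DecidableEq α] {s t : Finset α} {a : α} {k : ℕ}
    (ha : a ∈ s) (hst : s ⊆ insert a t) (hs : s.card = k + 1) : s.erase a ∈ powersetCard k t :=
  mem_powersetCard.mpr
    ⟨subset_insert_iff.mp hst, by rw [card_erase_of_mem ha, hs, Nat.add_sub_cancel]⟩

lemma IsCutset.exists_mem_image_insert {N k l a : ℕ} {D : Finset (Finset ℕ)}
    (hD : IsCutset N k l D) {f : ℕ → Finset ℕ}
    (hcard : ∀ i, k + 1 ≤ i → i ≤ l + 1 → (f i).card = i)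
    (hf : ∀ i, k + 1 ≤ i → i < l + 1 → f i ⊆ f (i + 1))
    (ha_bot : a ∈ f (k + 1)) (h_top : f (l + 1) ⊆ insert a (Icc 1 N)) :
    ∃ i, k + 1 ≤ i ∧ i ≤ l + 1 ∧ f i ∈ D.image (insert a) := by
  have hmem : ∀ i, k ≤ i → i ≤ l → a ∈ f (i + 1) := fun i hki hil =>
    subset_of_chain hf le_rfl (by omega) (by omega) ha_bot
  obtain ⟨i, hki, hil, hiD⟩ := hD.2 (fun i => (f (i + 1)).erase a)
    (fun i hki hil => mem_powersetCard.mp <| erase_mem_powersetCard (hmem i hki hil)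
      ((subset_of_chain hf (by omega) (by omega) le_rfl).trans h_top)
      (hcard (i + 1) (by omega) (by omega)))
    (fun i hki hil => erase_subset_erase a (hf (i + 1) (by omega) (by omega)))
  exact ⟨i + 1, by omega, by omega, mem_image.mpr ⟨_, hiD, insert_erase (hmem i hki hil)⟩⟩

lemma isChain_of_subset_of_subset {α : Type*} [DecidableEq α] {x y z : Finset α}
    (hxy : x ⊆ y) (hyz : y ⊆ z) :
    IsChain (· ⊆ ·) (({x, y, z} : Finset (Finset α)) : Set (Finset α)) := by
  simp only [coe_insert, coe_singleton]
  refine ((IsChain.singleton).insert ?_).insert ?_ <;> simp only [Set.mem_insert_iff,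
    Set.mem_singleton_iff, forall_eq_or_imp, forall_eq]
  · exact fun _ => Or.inl hyz
  · exact ⟨fun _ => Or.inl hxy, fun _ => Or.inl (hxy.trans hyz)⟩

lemma mem_cases_of_subset_of_subset {α : Type*} {A₀ A₁ A₂ : Finset α} {a b : α}
    (h01 : A₀ ⊆ A₁) (h12 : A₁ ⊆ A₂) :
    (a ∉ A₀ ∧ b ∉ A₀) ∨ (a ∈ A₁ ∧ b ∉ A₁) ∨ (a ∈ A₂ ∧ b ∈ A₂) ∨ (b ∈ A₀ ∧ a ∉ A₂) := by
  have := @h01 a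
  have := @h01 b
  have := @h12 a
  have := @h12 b
  tauto

section Construction

variable {n m : ℕ} {D : Finset (Finset ℕ)}

def tripleChains (n m : ℕ) : Finset (Finset ℕ) :=
  (powersetCard m (Icc 1 (n - 2))).biUnion fun g =>
    {g, insert (n - 1) g, insert n (insert (n - 1) g)}

def liftCutset (n m : ℕ) (D : Finset (Finset ℕ)) : Finset (Finset ℕ) :=
  tripleChains n m ∪ D.image (insert n)

lemma Icc_one_eq_insert_insert (hn : 2 ≤ n) :
    Icc 1 n = insert n (insert (n - 1) (Icc 1 (n - 2))) := by
  ext x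
  simp only [mem_Icc, mem_insert]
  omega

lemma mem_tripleChains {A : Finset ℕ} : A ∈ tripleChains n m ↔
    ∃ g ∈ powersetCard m (Icc 1 (n - 2)),
      A = g ∨ A = insert (n - 1) g ∨ A = insert n (insert (n - 1) g) := by
  simp [tripleChains]

lemma widthF_tripleChains_le : widthF (tripleChains n m) ≤ (n - 2).choose m := by
  unfold tripleChains
  refine (widthF_biUnion_le_card _ _ fun g _ => ?_).trans_eq ?_
  · exact isChain_of_subset_of_subset (subset_insert (n - 1) g) (subset_insert n _)
  · rw [card_powersetCard, Nat.card_Icc, Nat.add_sub_cancel]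

lemma widthF_liftCutset_le (hD : ∀ A ∈ D, n ∉ A) :
    widthF (liftCutset n m D) ≤ (n - 2).choose m + widthF D :=
  (widthF_union_le _ _).trans <| add_le_add widthF_tripleChains_le <|
    widthF_image_le _ fun A hA _ _ => insert_subset_insert_iff (hD A hA)

lemma liftCutset_subset_truncBool (hn : 2 ≤ n) (hD : D ⊆ truncBool (n - 2) (m - 1) (m + 1)) :
    liftCutset n m D ⊆ truncBool n m (m + 2) := by
  have hI : ∀ {A : Finset ℕ}, A ⊆ Icc 1 (n - 2) → n - 1 ∉ A ∧ n ∉ A := fun hA =>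
    ⟨fun h => by have := mem_Icc.mp (hA h); omega, fun h => by have := mem_Icc.mp (hA h); omega⟩
  intro A hA
  rw [mem_truncBool, Icc_one_eq_insert_insert hn]
  rcases mem_union.mp hA with hA | hA
  · obtain ⟨g, hg, rfl | rfl | rfl⟩ := mem_tripleChains.mp hA <;>
      obtain ⟨hgI, rfl⟩ := mem_powersetCard.mp hg <;> obtain ⟨hn1, hn⟩ := hI hgI
    · exact ⟨hgI.trans ((subset_insert _ _).trans (subset_insert _ _)), le_rfl, by omega⟩
    · refine ⟨(insert_subset_insert _ hgI).trans (subset_insert _ _), ?_⟩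
      rw [card_insert_of_notMem hn1]
      omega
    · refine ⟨insert_subset_insert n (insert_subset_insert _ hgI), ?_⟩
      rw [card_insert_of_notMem (by simp [hn]; omega), card_insert_of_notMem hn1]
      omega
  · obtain ⟨g, hg, rfl⟩ := mem_image.mp hA
    obtain ⟨hgI, hg1, hg2⟩ := mem_truncBool.mp (hD hg)
    refine ⟨insert_subset_insert n (hgI.trans (subset_insert _ _)), ?_⟩
    rw [card_insert_of_notMem (hI hgI).2]
    omega

lemma isCutset_liftCutset (hn : 2 ≤ n) (hD : IsCutset (n - 2) (m - 1) (m + 1) D) :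
    IsCutset n m (m + 2) (liftCutset n m D) := by
  refine ⟨liftCutset_subset_truncBool hn hD.1, fun f hf hmono => ?_⟩
  set I := Icc 1 (n - 2)
  have hsub : ∀ i, m ≤ i → i ≤ m + 2 → f i ⊆ insert n (insert (n - 1) I) :=
    fun i hi hi' => Icc_one_eq_insert_insert hn ▸ (hf i hi hi').1
  have hcard : ∀ i, m ≤ i → i ≤ m + 2 → (f i).card = i := fun i hi hi' => (hf i hi hi').2
  have h01 : f m ⊆ f (m + 1) := hmono m le_rfl (by omega)
  have h12 : f (m + 1) ⊆ f (m + 2) := hmono (m + 1) (by omega) (by omega)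
  have of_mem_tripleChains : ∀ i, m ≤ i → i ≤ m + 2 → f i ∈ tripleChains n m →
      ∃ i, m ≤ i ∧ i ≤ m + 2 ∧ f i ∈ liftCutset n m D :=
    fun i hi hi' hfi => ⟨i, hi, hi', mem_union_left _ hfi⟩
  rcases mem_cases_of_subset_of_subset (a := n - 1) (b := n) h01 h12 with
    ⟨ha, hb⟩ | ⟨ha, hb⟩ | ⟨ha, hb⟩ | ⟨hb, ha⟩
  · have hI : f m ⊆ I := (subset_insert_iff_of_notMem ha).mp
      ((subset_insert_iff_of_notMem hb).mp (hsub m le_rfl (by omega)))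
    exact of_mem_tripleChains m le_rfl (by omega) <| mem_tripleChains.mpr
      ⟨f m, mem_powersetCard.mpr ⟨hI, hcard m le_rfl (by omega)⟩, Or.inl rfl⟩
  · have hg := erase_mem_powersetCard ha
      ((subset_insert_iff_of_notMem hb).mp (hsub (m + 1) (by omega) (by omega)))
      (hcard (m + 1) (by omega) (by omega))
    exact of_mem_tripleChains (m + 1) (by omega) (by omega) <| mem_tripleChains.mpr
      ⟨_, hg, Or.inr (Or.inl (insert_erase ha).symm)⟩
  · have ha' : n - 1 ∈ (f (m + 2)).erase n := mem_erase.mpr ⟨by omega, ha⟩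
    obtain ⟨hsub', hcard'⟩ := mem_powersetCard.mp <|
      erase_mem_powersetCard hb (hsub (m + 2) (by omega) le_rfl) (hcard (m + 2) (by omega) le_rfl)
    exact of_mem_tripleChains (m + 2) (by omega) le_rfl <| mem_tripleChains.mpr
      ⟨_, erase_mem_powersetCard ha' hsub' hcard',
        Or.inr (Or.inr (by rw [insert_erase ha', insert_erase hb]))⟩
  obtain ⟨k, rfl⟩ : ∃ k, m = k + 1 :=
    Nat.exists_eq_add_one.mpr (card_pos.mpr ⟨n, hb⟩ |>.trans_eq (hcard _ le_rfl (by omega)))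
  have h_top : f (k + 2 + 1) ⊆ insert n I := by
    have := hsub (k + 1 + 2) (by omega) le_rfl
    rwa [insert_comm, subset_insert_iff_of_notMem ha] at this
  obtain ⟨i, hi, hi', hiD⟩ :=
    IsCutset.exists_mem_image_insert (by simpa using hD) hcard hmono hb h_top
  exact ⟨i, hi, hi', mem_union_right _ hiD⟩

end Construction

theorem stmt_8 (n m : ℕ) (h : 2 * m + 2 ≤ n) :
    hFun n m (m + 2) ≤ (n - 2).choose m + hFun (n - 2) (m - 1) (m + 1) := by
  obtain ⟨D, hD, hDw⟩ := exists_isCutset_widthF_eq_hFun (n := n - 2) (by omega : m - 1 ≤ m + 1)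
  have hDn : ∀ A ∈ D, n ∉ A := fun A hA hnA => by
    have := mem_Icc.mp ((mem_truncBool.mp (hD.1 hA)).1 hnA)
    omega
  calc hFun n m (m + 2) ≤ widthF (liftCutset n m D) :=
        hFun_le_widthF (isCutset_liftCutset (by omega) hD)
    _ ≤ (n - 2).choose m + widthF D := widthF_liftCutset_le hDn
    _ = (n - 2).choose m + hFun (n - 2) (m - 1) (m + 1) := by rw [hDw]
end

section
/- In a symmetric chain decomposition of 2^{[k]} constructed by de Bruijn's recursion, if A_1 ⊂ ... ⊂ A_r and B_1 ⊂ ... ⊂ B_s are two chains and A_i ⊆ B_j for some indices i, j, then i ≤ j. -/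
/-- One step of de Bruijn's recursion: from a chain `A₁ ⊂ ⋯ ⊂ A_r` of `2^{[k]}`
(listed bottom to top) form the chain `A₁ ⊂ ⋯ ⊂ A_r ⊂ A_r ∪ {k+1}` and, if `r ≥ 2`,
the chain `A₁ ∪ {k+1} ⊂ ⋯ ⊂ A_{r-1} ∪ {k+1}`. -/
def dbStep (k : ℕ) (ch : List (Finset ℕ)) : List (List (Finset ℕ)) :=
  (ch ++ [insert (k + 1) ch.getLast!]) ::
    (if ch.length ≤ 1 then [] else [ch.dropLast.map (insert (k + 1))])

/-- `DeBruijn k P` : `P` is the symmetric chain decomposition of `2^{[k]}`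
produced by de Bruijn's recursion (chains listed bottom to top). -/
inductive DeBruijn : ℕ → List (List (Finset ℕ)) → Prop
  | base : DeBruijn 0 [[∅]]
  | step (k : ℕ) (P : List (List (Finset ℕ))) :
      DeBruijn k P → DeBruijn (k + 1) (P.flatMap (dbStep k))

/-!
Induction on `k`, with chains indexed from `0`. Deleting `k + 1` sends the set at index `i` of a
new chain to a set at index `i₀` of the old chain it was built from, with `i = i₀` except for the
new top `T ∪ {k+1}` of an extended chain (`T` the old top), where `i = i₀ + 1 = r`. Deletion
preserves inclusion, so `i₀ ≤ j₀` by induction, and this settles every case except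
`T ∪ {k+1} ⊆ B ∪ {k+1}` with `B` at index `j₀ ≤ s - 2` of an old chain that was shortened.
There the symmetry of the chains, `2|C| + r = 2i + k + 1` for `C` at index `i` of a chain of
length `r`, together with `|T| ≤ |B|` gives `r ≤ j₀`.
-/

theorem mem_dbStep {k : ℕ} {ch ch' : List (Finset ℕ)} (hc : ch' ∈ dbStep k ch) :
    ch' = ch ++ [insert (k + 1) ch.getLast!] ∨
      2 ≤ ch.length ∧ ch' = ch.dropLast.map (insert (k + 1)) := by
  unfold dbStep at hc
  split_ifs at hc with hlen
  · exact .inl (List.mem_singleton.mp hc)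
  · exact (List.mem_pair.mp hc).imp_right fun h => ⟨by omega, h⟩

theorem ne_nil_of_mem_dbStep {k : ℕ} {ch ch' : List (Finset ℕ)} (hc : ch' ∈ dbStep k ch) :
    ch' ≠ [] := by
  rcases mem_dbStep hc with rfl | ⟨hlen, rfl⟩
  · simp
  · rw [← List.length_pos_iff, List.length_map, List.length_dropLast]
    omega

/-- The three cases: `C = ch[i₀]` in the extended chain, `C = ch[i₀] ∪ {k+1}` as its new top, or
`C = ch[i₀] ∪ {k+1}` in the shortened chain. -/
theorem exists_getElem?_erase_of_mem_dbStep {k i : ℕ} {ch ch' : List (Finset ℕ)} {C : Finset ℕ}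
    (hne : ch ≠ []) (hk : ∀ S ∈ ch, k + 1 ∉ S) (hc : ch' ∈ dbStep k ch) (hC : ch'[i]? = some C) :
    ∃ i₀, ch[i₀]? = some (C.erase (k + 1)) ∧
      (k + 1 ∉ C ∧ i = i₀ ∧ ch'.length = ch.length + 1 ∨
        k + 1 ∈ C ∧ i = i₀ + 1 ∧ i = ch.length ∧ ch'.length = ch.length + 1 ∨
        k + 1 ∈ C ∧ i = i₀ ∧ i + 1 < ch.length ∧ ch'.length + 1 = ch.length) := by
  have hk' {i₀ : ℕ} {S : Finset ℕ} (hS : ch[i₀]? = some S) : k + 1 ∉ S :=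
    hk S (List.mem_of_getElem? hS)
  have hlen : 0 < ch.length := List.length_pos_iff.mpr hne
  rcases mem_dbStep hc with rfl | ⟨hlen₂, rfl⟩
  · rw [List.length_append, List.length_singleton]
    rcases lt_or_ge i ch.length with hi | hi
    · rw [List.getElem?_append_left hi] at hC
      refine ⟨i, ?_, .inl ⟨hk' hC, rfl, rfl⟩⟩
      rwa [Finset.erase_eq_of_notMem (hk' hC)]
    · have hlast : ch[ch.length - 1]? = some ch.getLast! := by
        rw [List.getLast!_of_getLast? (List.getLast?_eq_some_getLast hne),
          ← List.getLast?_eq_getElem?, List.getLast?_eq_some_getLast hne]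
      rw [List.getElem?_append_right hi, List.getElem?_singleton] at hC
      obtain ⟨hi', rfl⟩ : i - ch.length = 0 ∧ insert (k + 1) ch.getLast! = C := by
        simpa using hC
      refine ⟨ch.length - 1, ?_, .inr (.inl ⟨Finset.mem_insert_self _ _, by omega, by omega, rfl⟩)⟩
      rwa [Finset.erase_insert (hk' hlast)]
  · rw [List.getElem?_map, List.getElem?_dropLast] at hC
    split_ifs at hC with hi
    · obtain ⟨C₀, hC₀, rfl⟩ := Option.map_eq_some_iff.mp hC
      refine ⟨i, ?_, .inr (.inr ⟨Finset.mem_insert_self _ _, rfl, by omega, ?_⟩)⟩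
      · rwa [Finset.erase_insert (hk' hC₀)]
      · rw [List.length_map, List.length_dropLast]
        omega
    · simp at hC

namespace DeBruijn

variable {k : ℕ} {P : List (List (Finset ℕ))}

theorem ne_nil (hP : DeBruijn k P) : ∀ ch ∈ P, ch ≠ [] := by
  cases hP with
  | base => simp
  | step k P hP =>
    intro ch' hc
    obtain ⟨ch, -, hc⟩ := List.mem_flatMap.mp hc
    exact ne_nil_of_mem_dbStep hc

theorem subset_range (hP : DeBruijn k P) : ∀ ch ∈ P, ∀ S ∈ ch, S ⊆ Finset.range (k + 1) := by
  induction hP with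
  | base => simp
  | step k P hP ih =>
    intro ch' hc C hC
    obtain ⟨ch, hch, hc⟩ := List.mem_flatMap.mp hc
    obtain ⟨i, hi⟩ := List.mem_iff_getElem?.mp hC
    obtain ⟨i₀, hi₀, -⟩ := exists_getElem?_erase_of_mem_dbStep (hP.ne_nil ch hch)
      (fun S hS h => Finset.notMem_range_self (ih ch hch S hS h)) hc hi
    calc C ⊆ insert (k + 1) (C.erase (k + 1)) := Finset.insert_erase_subset _ _
      _ ⊆ insert (k + 1) (Finset.range (k + 1)) :=
          Finset.insert_subset_insert _ (ih ch hch _ (List.mem_of_getElem? hi₀))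
      _ = Finset.range (k + 1 + 1) := Finset.range_add_one.symm

theorem succ_notMem (hP : DeBruijn k P) {ch : List (Finset ℕ)} (hch : ch ∈ P) :
    ∀ S ∈ ch, k + 1 ∉ S :=
  fun S hS h => Finset.notMem_range_self (hP.subset_range ch hch S hS h)

theorem exists_getElem?_erase (hP : DeBruijn k P) {ch ch' : List (Finset ℕ)} (hch : ch ∈ P)
    (hc : ch' ∈ dbStep k ch) {i : ℕ} {C : Finset ℕ} (hC : ch'[i]? = some C) :
    ∃ i₀, ch[i₀]? = some (C.erase (k + 1)) ∧
      (k + 1 ∉ C ∧ i = i₀ ∧ ch'.length = ch.length + 1 ∨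
        k + 1 ∈ C ∧ i = i₀ + 1 ∧ i = ch.length ∧ ch'.length = ch.length + 1 ∨
        k + 1 ∈ C ∧ i = i₀ ∧ i + 1 < ch.length ∧ ch'.length + 1 = ch.length) :=
  exists_getElem?_erase_of_mem_dbStep (hP.ne_nil ch hch) (hP.succ_notMem hch) hc hC

theorem two_mul_card_add_length (hP : DeBruijn k P) :
    ∀ ch ∈ P, ∀ (i : ℕ) (A : Finset ℕ), ch[i]? = some A →
      2 * A.card + ch.length = 2 * i + k + 1 := by
  induction hP with
  | base =>
    intro ch hch i A hA
    obtain rfl := List.mem_singleton.mp hch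
    obtain ⟨rfl, rfl⟩ : i = 0 ∧ A = ∅ := by simpa [List.getElem?_singleton, eq_comm] using hA
    rfl
  | step k P hP ih =>
    intro ch' hc i C hC
    obtain ⟨ch, hch, hc⟩ := List.mem_flatMap.mp hc
    obtain ⟨i₀, hi₀, hcases⟩ := hP.exists_getElem?_erase hch hc hC
    have hrank := ih ch hch i₀ _ hi₀
    rcases hcases with ⟨hmem, rfl, hlen⟩ | ⟨hmem, rfl, -, hlen⟩ | ⟨hmem, rfl, -, hlen⟩
    · rw [Finset.erase_eq_of_notMem hmem] at hrank
      omega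
    all_goals
      rw [Finset.card_erase_of_mem hmem] at hrank
      have hpos := Finset.card_pos.mpr ⟨_, hmem⟩
      omega

theorem le_of_subset (hP : DeBruijn k P) :
    ∀ ch₁ ∈ P, ∀ ch₂ ∈ P, ∀ (i j : ℕ) (A B : Finset ℕ),
      ch₁[i]? = some A → ch₂[j]? = some B → A ⊆ B → i ≤ j := by
  induction hP with
  | base =>
    intro ch₁ hch₁ ch₂ hch₂ i j A B hA hB hAB
    obtain rfl := List.mem_singleton.mp hch₁
    obtain ⟨rfl, -⟩ : i = 0 ∧ A = ∅ := by simpa [List.getElem?_singleton, eq_comm] using hA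
    exact j.zero_le
  | step k P hP ih =>
    intro ch₁' hch₁' ch₂' hch₂' i j A B hA hB hAB
    obtain ⟨ch₁, hch₁, hch₁'⟩ := List.mem_flatMap.mp hch₁'
    obtain ⟨ch₂, hch₂, hch₂'⟩ := List.mem_flatMap.mp hch₂'
    obtain ⟨i₀, hA₀, hi⟩ := hP.exists_getElem?_erase hch₁ hch₁' hA
    obtain ⟨j₀, hB₀, hj⟩ := hP.exists_getElem?_erase hch₂ hch₂' hB
    have hsub := Finset.erase_subset_erase (k + 1) hAB
    have hij₀ := ih ch₁ hch₁ ch₂ hch₂ i₀ j₀ _ _ hA₀ hB₀ hsub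
    have hcard := Finset.card_le_card hsub
    have hrA := hP.two_mul_card_add_length ch₁ hch₁ i₀ _ hA₀
    have hrB := hP.two_mul_card_add_length ch₂ hch₂ j₀ _ hB₀
    rcases hi with ⟨-, rfl, -⟩ | ⟨hkA, rfl, hi, -⟩ | ⟨hkA, rfl, -⟩ <;>
      rcases hj with ⟨hkB, rfl, -⟩ | ⟨-, rfl, -, -⟩ | ⟨-, rfl, hj, -⟩
    all_goals first | omega | exact absurd (hAB hkA) hkB

end DeBruijn

theorem stmt_17 (k : ℕ) (P : List (List (Finset ℕ))) (hP : DeBruijn k P)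
    (ch₁ ch₂ : List (Finset ℕ)) (h₁ : ch₁ ∈ P) (h₂ : ch₂ ∈ P)
    (i j : ℕ) (A B : Finset ℕ)
    (hA : ch₁[i]? = some A) (hB : ch₂[j]? = some B) (hAB : A ⊆ B) :
    i ≤ j :=
  hP.le_of_subset ch₁ h₁ ch₂ h₂ i j A B hA hB hAB
end
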